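/- For every positive integer i, the infinite series ∑_{t=i}^{∞} α^i_t converges and its sum equals 1 + 1/H. -/

import Mathlib

/-- Learning rate `α_t = (H+1)/(H+t)`. -/
noncomputable def lr (H t : ℕ) : ℝ := (H + 1) / (H + t)

/-- The coefficient `α^i_t`: for `i = 0` it is `∏_{j=1}^t (1 - α_j)`, and for
`i ≥ 1` it is `α_i · ∏_{j=i+1}^t (1 - α_j)`. -/
noncomputable def alphaC (H i t : ℕ) : ℝ :=
  if i = 0 then ∏ j ∈ Finset.Icc 1 t, (1 - lr H j)
  else lr H i * ∏ j ∈ Finset.Icc (i + 1) t, (1 - lr H j)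

/-!
Since `1 - α_{t+1} = t / (H + t + 1)`, the coefficient `α^i_{i+n}` equals
`(H + 1) / (H + i + n) · P n` with `P n = ∏_{k < n} (i + k) / (H + i + k)`.
As `P n - P (n + 1) = P n · H / (H + i + n)`, this is `(H + 1) / H · (P n - P (n + 1))`,
so the series telescopes to `(H + 1) / H · P 0 = 1 + 1 / H`; the tail `P n` vanishes
because `P n ≤ i / (i + n)` once `H ≥ 1`.
-/

open Filter Finset Topology

theorem hasSum_sub_succ_of_antitone {b : ℕ → ℝ} (hb : Antitone b) {l : ℝ}
    (h : Tendsto b atTop (𝓝 l)) : HasSum (fun n => b n - b (n + 1)) (b 0 - l) := by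
  rw [hasSum_iff_tendsto_nat_of_nonneg fun n => sub_nonneg.2 (hb n.le_succ)]
  simpa only [Finset.sum_range_sub'] using h.const_sub (b 0)

theorem one_sub_lr_succ (H t : ℕ) : 1 - lr H (t + 1) = t / (H + t + 1) := by
  unfold lr
  push_cast
  field_simp
  ring

theorem alphaC_self {H i : ℕ} (hi : i ≠ 0) : alphaC H i i = lr H i := by
  simp [alphaC, hi]

theorem alphaC_succ {H i t : ℕ} (hi : i ≠ 0) (hit : i ≤ t) :
    alphaC H i (t + 1) = alphaC H i t * (1 - lr H (t + 1)) := by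
  simp only [alphaC, if_neg hi, Finset.prod_Icc_succ_top (by omega : i + 1 ≤ t + 1)]
  ring

/-- `tailProd H i n = ∏_{j=i+1}^{i+n} (1 - α_j)`, by `one_sub_lr_succ`. -/
noncomputable def tailProd (H i n : ℕ) : ℝ :=
  ∏ k ∈ range n, ((i + k : ℝ) / (H + i + k))

theorem tailProd_zero (H i : ℕ) : tailProd H i 0 = 1 := by
  simp [tailProd]

theorem tailProd_succ (H i n : ℕ) :
    tailProd H i (n + 1) = tailProd H i n * ((i + n : ℝ) / (H + i + n)) :=
  Finset.prod_range_succ _ _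

theorem tailProd_nonneg (H i n : ℕ) : 0 ≤ tailProd H i n :=
  Finset.prod_nonneg fun _ _ => by positivity

theorem tailProd_antitone (H i : ℕ) : Antitone (tailProd H i) := by
  refine antitone_nat_of_succ_le fun n => ?_
  rw [tailProd_succ]
  exact mul_le_of_le_one_right (tailProd_nonneg H i n)
    (div_le_one_of_le₀ (by linarith [(H.cast_nonneg : (0 : ℝ) ≤ H)]) (by positivity))

theorem tailProd_le {H i : ℕ} (hH : 1 ≤ H) (hi : i ≠ 0) (n : ℕ) :
    tailProd H i n ≤ i / (i + n) := by
  have hH' : (1 : ℝ) ≤ H := by exact_mod_cast hH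
  have hi' : (0 : ℝ) < i := by positivity
  induction n with
  | zero => simp [tailProd_zero, hi'.ne']
  | succ n ih =>
    have hfactor : (i + n : ℝ) / (H + i + n) ≤ (i + n) / (i + n + 1) :=
      div_le_div_of_nonneg_left (by positivity) (by positivity) (by linarith)
    calc tailProd H i (n + 1) = tailProd H i n * ((i + n : ℝ) / (H + i + n)) :=
          tailProd_succ H i n
      _ ≤ i / (i + n) * ((i + n) / (i + n + 1)) :=
          mul_le_mul ih hfactor (by positivity) (by positivity)
      _ = i / (i + (n + 1 : ℕ)) := by
          push_cast
          field_simp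
          ring

theorem tendsto_tailProd_zero {H i : ℕ} (hH : 1 ≤ H) (hi : i ≠ 0) :
    Tendsto (tailProd H i) atTop (𝓝 0) :=
  squeeze_zero (tailProd_nonneg H i) (tailProd_le hH hi) <|
    tendsto_const_nhds.div_atTop <|
      tendsto_atTop_add_const_left _ _ tendsto_natCast_atTop_atTop

theorem alphaC_add_eq_mul_tailProd {H i : ℕ} (hi : i ≠ 0) (n : ℕ) :
    alphaC H i (i + n) = (H + 1) / (H + i + n) * tailProd H i n := by
  induction n with
  | zero => simp [alphaC_self hi, tailProd_zero, lr]
  | succ n ih =>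
    rw [← add_assoc, alphaC_succ hi (by omega), ih, one_sub_lr_succ, tailProd_succ]
    push_cast
    field_simp
    ring

theorem alphaC_add_eq_sub {H i : ℕ} (hH : H ≠ 0) (hi : i ≠ 0) (n : ℕ) :
    alphaC H i (i + n) = (H + 1) / H * (tailProd H i n - tailProd H i (n + 1)) := by
  rw [alphaC_add_eq_mul_tailProd hi, tailProd_succ]
  field_simp
  ring

/-- The series `∑_{t=i}^∞ α^i_t` converges with sum `1 + 1/H`. -/
theorem stmt_2 (H : ℕ) (hH : 1 ≤ H) (i : ℕ) (hi : 1 ≤ i) :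
    HasSum (fun n : ℕ => alphaC H i (i + n)) (1 + 1 / (H : ℝ)) := by
  have hH0 : H ≠ 0 := by omega
  have hi0 : i ≠ 0 := by omega
  have hlimit : 1 + 1 / (H : ℝ) = (H + 1) / H * (tailProd H i 0 - 0) := by
    rw [tailProd_zero, sub_zero]
    field_simp
  simp only [alphaC_add_eq_sub hH0 hi0, hlimit]
  exact (hasSum_sub_succ_of_antitone (tailProd_antitone H i)
    (tendsto_tailProd_zero hH hi0)).mul_left _
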